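/- The extended K-introduction rule is admissible in IELG⁻: if Γ₁, K(Δ), Δ, Γ₂ ⇒ F is provable with depth at most n, then Γ₁, K(Δ, Γ₂) ⇒ KF is provable with depth at most n+1. -/
import Mathlib


inductive Fm : Type
  | var : ℕ → Fm
  | bot : Fm
  | and : Fm → Fm → Fm
  | or  : Fm → Fm → Fm
  | imp : Fm → Fm → Fm
  | K   : Fm → Fm
deriving DecidableEq

/-- ¬F abbreviates F → ⊥. -/
def Fm.neg (F : Fm) : Fm := F.imp .bot

/-- A is a propositional variable or ⊥. -/
def Fm.isAtom (A : Fm) : Prop := A = Fm.bot ∨ ∃ n, A = Fm.var n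

/-- K applied to each member of a multiset. -/
def Kset (Γ : Multiset Fm) : Multiset Fm := Γ.map Fm.K
/-- Depth-indexed cut-free sequent calculus IELG⁻ : `IELGm n Γ F` means the
sequent Γ ⇒ F has an IELG⁻-proof of depth at most n. -/
inductive IELGm : ℕ → Multiset Fm → Fm → Prop
  | ax (n : ℕ) (Γ : Multiset Fm) (A : Fm) : A.isAtom → IELGm n (A ::ₘ Γ) A
  | andL (n : ℕ) (Γ : Multiset Fm) (F G H : Fm) :
      IELGm n (F ::ₘ G ::ₘ Γ) H → IELGm (n+1) (F.and G ::ₘ Γ) H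
  | andR (n : ℕ) (Γ : Multiset Fm) (F G : Fm) :
      IELGm n Γ F → IELGm n Γ G → IELGm (n+1) Γ (F.and G)
  | orL (n : ℕ) (Γ : Multiset Fm) (F G H : Fm) :
      IELGm n (F ::ₘ Γ) H → IELGm n (G ::ₘ Γ) H → IELGm (n+1) (F.or G ::ₘ Γ) H
  | orR1 (n : ℕ) (Γ : Multiset Fm) (F G : Fm) : IELGm n Γ F → IELGm (n+1) Γ (F.or G)
  | orR2 (n : ℕ) (Γ : Multiset Fm) (F G : Fm) : IELGm n Γ G → IELGm (n+1) Γ (F.or G)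
  | impL (n : ℕ) (Γ : Multiset Fm) (F G H : Fm) :
      IELGm n (F.imp G ::ₘ Γ) F → IELGm n (G ::ₘ Γ) H →
      IELGm (n+1) (F.imp G ::ₘ Γ) H
  | impR (n : ℕ) (Γ : Multiset Fm) (F G : Fm) :
      IELGm n (F ::ₘ Γ) G → IELGm (n+1) Γ (F.imp G)
  | KI1 (n : ℕ) (Γ Δ : Multiset Fm) (F : Fm) :
      (∀ G, Fm.K G ∉ Γ) →
      IELGm n (Γ + Kset Δ + Δ) F → IELGm (n+1) (Γ + Kset Δ) (Fm.K F)
  | U (n : ℕ) (Γ : Multiset Fm) (F : Fm) :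
      IELGm n Γ (Fm.K Fm.bot) → IELGm (n+1) Γ F

/-- Every multiset splits into a K-free part and a Kset part. -/
lemma ksplit (Γ : Multiset Fm) : ∃ Γ' S, Γ = Γ' + Kset S ∧ ∀ G, Fm.K G ∉ Γ' := by
  induction Γ using Multiset.induction with
  | empty => exact ⟨0, 0, rfl, by simp⟩
  | cons a s ih =>
    obtain ⟨Γ', S, rfl, h⟩ := ih
    cases a with
    | K b =>
      refine ⟨Γ', b ::ₘ S, ?_, h⟩
      simp only [Kset, Multiset.map_cons]
      rw [Multiset.add_cons]
    | var m => exact ⟨.var m ::ₘ Γ', S, by rw [Multiset.cons_add], by simp [h]⟩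
    | bot => exact ⟨.bot ::ₘ Γ', S, by rw [Multiset.cons_add], by simp [h]⟩
    | and b c => exact ⟨.and b c ::ₘ Γ', S, by rw [Multiset.cons_add], by simp [h]⟩
    | or b c => exact ⟨.or b c ::ₘ Γ', S, by rw [Multiset.cons_add], by simp [h]⟩
    | imp b c => exact ⟨.imp b c ::ₘ Γ', S, by rw [Multiset.cons_add], by simp [h]⟩

/-- Depth-preserving weakening. -/
lemma weak {n : ℕ} {Γ : Multiset Fm} {F : Fm} (h : IELGm n Γ F) :
    ∀ Θ : Multiset Fm, IELGm n (Γ + Θ) F := by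
  induction h with
  | ax n Γ A hA => intro Θ; rw [Multiset.cons_add]; exact .ax n _ A hA
  | andL n Γ F G H _ ih =>
    intro Θ; rw [Multiset.cons_add]
    exact .andL n _ F G H (by have := ih Θ; simpa [Multiset.cons_add] using this)
  | andR n Γ F G _ _ ih1 ih2 => intro Θ; exact .andR n _ F G (ih1 Θ) (ih2 Θ)
  | orL n Γ F G H _ _ ih1 ih2 =>
    intro Θ; rw [Multiset.cons_add]
    exact .orL n _ F G H (by simpa [Multiset.cons_add] using ih1 Θ)
      (by simpa [Multiset.cons_add] using ih2 Θ)
  | orR1 n Γ F G _ ih => intro Θ; exact .orR1 n _ F G (ih Θ)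
  | orR2 n Γ F G _ ih => intro Θ; exact .orR2 n _ F G (ih Θ)
  | impL n Γ F G H _ _ ih1 ih2 =>
    intro Θ; rw [Multiset.cons_add]
    exact .impL n _ F G H (by simpa [Multiset.cons_add] using ih1 Θ)
      (by simpa [Multiset.cons_add] using ih2 Θ)
  | impR n Γ F G _ ih =>
    intro Θ; exact .impR n _ F G (by simpa [Multiset.cons_add] using ih Θ)
  | KI1 n Γ Δ F hK _ ih =>
    intro Θ
    obtain ⟨Θ', S, rfl, hΘ⟩ := ksplit Θ
    have hctx : Γ + Kset Δ + (Θ' + Kset S) = (Γ + Θ') + Kset (Δ + S) := by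
      simp only [Kset, Multiset.map_add]; abel
    rw [hctx]
    refine .KI1 n _ _ F ?_ ?_
    · intro G hG
      rcases Multiset.mem_add.mp hG with h1 | h2
      · exact hK G h1
      · exact hΘ G h2
    · have := ih (Θ' + Kset S + S)
      have hctx2 : Γ + Kset Δ + Δ + (Θ' + Kset S + S) =
          Γ + Θ' + Kset (Δ + S) + (Δ + S) := by
        simp only [Kset, Multiset.map_add]; abel
      rwa [hctx2] at this
  | U n Γ F _ ih => intro Θ; exact .U n _ F (ih Θ)

/-- The extended K-introduction rule (KI_ext) is admissible in IELG⁻, with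
depth increased by at most one. -/
theorem stmt4 (n : ℕ) (Γ₁ Γ₂ Δ : Multiset Fm) (F : Fm) :
    IELGm n (Γ₁ + Kset Δ + Δ + Γ₂) F →
    IELGm (n+1) (Γ₁ + Kset (Δ + Γ₂)) (Fm.K F) := by
  intro h
  obtain ⟨Γ', S, rfl, hK⟩ := ksplit Γ₁
  have hctx : Γ' + Kset S + Kset (Δ + Γ₂) = Γ' + Kset (S + Δ + Γ₂) := by
    simp only [Kset, Multiset.map_add]; abel
  rw [hctx]
  refine .KI1 n Γ' (S + Δ + Γ₂) F hK ?_
  have := weak h (Kset Γ₂ + S)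
  have hctx2 : Γ' + Kset S + Kset Δ + Δ + Γ₂ + (Kset Γ₂ + S) =
      Γ' + Kset (S + Δ + Γ₂) + (S + Δ + Γ₂) := by
    simp only [Kset, Multiset.map_add]; abel
  rwa [hctx2] at this
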